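/- arXiv:2405.16397 — 2 statements merged into one kernel-verified Lean document; each statement's English description precedes it below -/
import Mathlib

section
/- Let J : ℝ^d → ℝ be twice continuously differentiable and suppose there exist constants 0 < a ≤ b such that a·I ≼ ∇²J(θ) ≼ b·I (in the Loewner order) for all θ ∈ ℝ^d. Let F be a symmetric d×d real matrix with a·I ≼ F ≼ b·I, and for θ ∈ ℝ^d set Δθ = F⁻¹ ∇J(θ). Then the update with step size a/b strictly decreases J proportionally to the squared gradient norm: J(θ − (a/b)·Δθ) − J(θ) ≤ −(a/(2b²))·‖∇J(θ)‖₂². -/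
/-!
Along the segment from `x` to `x + v` the Hessian bound `∇²J ≼ b` gives the quadratic upper
bound `J (x + v) ≤ J x + ⟪∇J x, v⟫ + b/2 ‖v‖²`. For the preconditioned direction
`Δ = F⁻¹ ∇J θ` we have `∇J θ = FΔ`, and `a ≼ F ≼ b` gives `a ‖Δ‖² ≤ ⟪∇J θ, Δ⟫` and
`‖∇J θ‖² = ‖FΔ‖² ≤ b ⟪∇J θ, Δ⟫` (from `F² ≼ bF`). With step `a/b` the quadratic term
`(a²/2b) ‖Δ‖²` is then at most half the linear decrease `(a/b) ⟪∇J θ, Δ⟫`, and the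
remaining decrease `(a/2b) ⟪∇J θ, Δ⟫` is at least `(a/2b²) ‖∇J θ‖²`.
-/

open scoped RealInnerProductSpace Matrix ComplexOrder

theorem le_add_deriv_add_of_hasDerivAt_le {φ φ' φ'' : ℝ → ℝ} {c : ℝ}
    (hφ : ∀ t, HasDerivAt φ (φ' t) t) (hφ' : ∀ t, HasDerivAt φ' (φ'' t) t)
    (hc : ∀ t, φ'' t ≤ c) :
    φ 1 ≤ φ 0 + φ' 0 + c / 2 := by
  have hψ : ∀ t, HasDerivAt (fun t => c / 2 * t ^ 2 - φ t) (c * t - φ' t) t := fun t =>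
    (((hasDerivAt_pow 2 t).const_mul (c / 2)).sub (hφ t)).congr_deriv (by ring)
  have hψ' : ∀ t, HasDerivAt (fun t => c * t - φ' t) (c - φ'' t) t := fun t =>
    (((hasDerivAt_id t).const_mul c).sub (hφ' t)).congr_deriv (by simp)
  have hconvex : ConvexOn ℝ Set.univ (fun t => c / 2 * t ^ 2 - φ t) :=
    convexOn_of_hasDerivWithinAt2_nonneg convex_univ
      (fun t _ => (hψ t).continuousAt.continuousWithinAt)
      (fun t _ => (hψ t).hasDerivWithinAt) (fun t _ => (hψ' t).hasDerivWithinAt)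
      (fun t _ => sub_nonneg.mpr (hc t))
  have hslope := hconvex.le_slope_of_hasDerivAt (Set.mem_univ 0) (Set.mem_univ 1) one_pos (hψ 0)
  simp only [slope_def_field] at hslope
  norm_num at hslope
  linarith

theorem ContDiff.gradient {E : Type*} [NormedAddCommGroup E] [InnerProductSpace ℝ E]
    [CompleteSpace E] {J : E → ℝ} {m n : WithTop ℕ∞} (hJ : ContDiff ℝ n J) (hmn : m + 1 ≤ n) :
    ContDiff ℝ m (gradient J) :=
  (InnerProductSpace.toDual ℝ E).symm.contDiff.comp (hJ.fderiv_right hmn)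

theorem le_add_inner_gradient_add_of_inner_fderiv_gradient_le {E : Type*}
    [NormedAddCommGroup E] [InnerProductSpace ℝ E] [CompleteSpace E] {J : E → ℝ}
    (hJ : Differentiable ℝ J) (hJ' : Differentiable ℝ (gradient J)) {b : ℝ}
    (hb : ∀ θ v : E, ⟪fderiv ℝ (gradient J) θ v, v⟫ ≤ b * ‖v‖ ^ 2) (x v : E) :
    J (x + v) ≤ J x + ⟪gradient J x, v⟫ + b / 2 * ‖v‖ ^ 2 := by
  have hline : ∀ t : ℝ, HasDerivAt (fun t : ℝ => x + t • v) v t := fun t => by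
    simpa using ((hasDerivAt_id t).smul_const v).const_add x
  have hφ : ∀ t : ℝ, HasDerivAt (fun t => J (x + t • v)) ⟪gradient J (x + t • v), v⟫ t :=
    fun t => (hJ _).hasGradientAt.hasFDerivAt.comp_hasDerivAt t (hline t)
  have hφ' : ∀ t : ℝ, HasDerivAt (fun t => ⟪gradient J (x + t • v), v⟫)
      ⟪fderiv ℝ (gradient J) (x + t • v) v, v⟫ t := fun t =>
    (((hJ' _).hasFDerivAt.comp_hasDerivAt t (hline t)).inner ℝ (hasDerivAt_const t v)).congr_deriv
      (by simp)
  have h := le_add_deriv_add_of_hasDerivAt_le hφ hφ' (fun t => hb _ v)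
  simp only [zero_smul, add_zero, one_smul] at h
  linarith

theorem Matrix.PosDef.of_posSemidef_sub_smul_one {n 𝕜 : Type*} [Fintype n] [DecidableEq n]
    [RCLike 𝕜] {F : Matrix n n 𝕜} {a : 𝕜} (ha : 0 < a) (hFa : (F - a • 1).PosSemidef) :
    F.PosDef := by
  simpa using PosDef.posSemidef_add hFa (PosDef.one.smul ha)

open scoped MatrixOrder in
theorem Matrix.PosSemidef.smul_sub_mul_self {n 𝕜 : Type*} [Fintype n] [DecidableEq n]
    [RCLike 𝕜] {F : Matrix n n 𝕜} {b : 𝕜} (hF : F.PosSemidef) (hFb : (b • 1 - F).PosSemidef) :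
    (b • F - F * F).PosSemidef := by
  obtain ⟨S, hSH, hSS⟩ : ∃ S : Matrix n n 𝕜, Sᴴ = S ∧ S * S = F :=
    ⟨CFC.sqrt F, (nonneg_iff_posSemidef.mp (CFC.sqrt_nonneg F)).1,
      CFC.sqrt_mul_sqrt_self F hF.nonneg⟩
  -- conjugating `b - F ≽ 0` by `√F` gives `bF - F² ≽ 0`
  have h := hFb.mul_mul_conjTranspose_same S
  rwa [hSH, Matrix.mul_sub, Matrix.sub_mul, Matrix.mul_smul, Matrix.mul_one, Matrix.smul_mul,
    hSS, show S * F * S = F * F by rw [← hSS]; noncomm_ring] at h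

section EuclideanBounds

variable {n : Type*} [Fintype n] [DecidableEq n] {F : Matrix n n ℝ}

theorem Matrix.PosSemidef.inner_toEuclideanLin_self_nonneg (hF : F.PosSemidef)
    (x : EuclideanSpace ℝ n) : 0 ≤ ⟪toEuclideanLin F x, x⟫ :=
  (isPositive_toEuclideanLin_iff.mpr hF).inner_nonneg_left x

theorem Matrix.mul_norm_sq_le_inner_toEuclideanLin_self {a : ℝ} (hFa : (F - a • 1).PosSemidef)
    (x : EuclideanSpace ℝ n) : a * ‖x‖ ^ 2 ≤ ⟪toEuclideanLin F x, x⟫ := by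
  have h := hFa.inner_toEuclideanLin_self_nonneg x
  simp only [map_sub, map_smul, toLpLin_one, LinearMap.sub_apply, LinearMap.smul_apply,
    LinearMap.id_coe, id_eq, inner_sub_left, real_inner_smul_left, real_inner_self_eq_norm_sq,
    sub_nonneg] at h
  exact h

theorem Matrix.PosSemidef.norm_toEuclideanLin_sq_le {b : ℝ} (hF : F.PosSemidef)
    (hFb : (b • F - F * F).PosSemidef) (x : EuclideanSpace ℝ n) :
    ‖toEuclideanLin F x‖ ^ 2 ≤ b * ⟪toEuclideanLin F x, x⟫ := by
  have h := hFb.inner_toEuclideanLin_self_nonneg x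
  have hsymm := (isPositive_toEuclideanLin_iff.mpr hF).isSymmetric
  simp only [map_sub, map_smul, toLpLin_mul_same, LinearMap.sub_apply, LinearMap.smul_apply,
    LinearMap.coe_comp, Function.comp_apply, inner_sub_left, real_inner_smul_left, hsymm _ x,
    real_inner_self_eq_norm_sq, sub_nonneg] at h
  rwa [real_inner_comm] at h

end EuclideanBounds

theorem stmt_0_general (d : ℕ) (J : EuclideanSpace ℝ (Fin d) → ℝ) (a b : ℝ)
    (ha : 0 < a) (hab : a ≤ b)
    (hJ : ContDiff ℝ 2 J)
    (hHess : ∀ θ v : EuclideanSpace ℝ (Fin d),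
      a * ‖v‖ ^ 2 ≤ ⟪fderiv ℝ (gradient J) θ v, v⟫ ∧
        ⟪fderiv ℝ (gradient J) θ v, v⟫ ≤ b * ‖v‖ ^ 2)
    (F : Matrix (Fin d) (Fin d) ℝ)
    (hFa : (F - a • (1 : Matrix (Fin d) (Fin d) ℝ)).PosSemidef)
    (hFb : ((b • (1 : Matrix (Fin d) (Fin d) ℝ)) - F).PosSemidef)
    (θ Δθ : EuclideanSpace ℝ (Fin d))
    (hΔθ : Δθ = Matrix.toEuclideanLin F⁻¹ (gradient J θ)) :
    J (θ - (a / b) • Δθ) - J θ ≤ -(a / (2 * b ^ 2)) * ‖gradient J θ‖ ^ 2 := by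
  have hb : 0 < b := ha.trans_le hab
  have hF := Matrix.PosDef.of_posSemidef_sub_smul_one ha hFa
  have hFΔθ : Matrix.toEuclideanLin F Δθ = gradient J θ := by
    rw [hΔθ, ← LinearMap.comp_apply, ← Matrix.toLpLin_mul_same,
      Matrix.mul_nonsing_inv _ (F.isUnit_iff_isUnit_det.mp hF.isUnit)]
    simp
  have hlower := Matrix.mul_norm_sq_le_inner_toEuclideanLin_self hFa Δθ
  have hupper := hF.posSemidef.norm_toEuclideanLin_sq_le (hF.posSemidef.smul_sub_mul_self hFb) Δθ
  rw [hFΔθ] at hlower hupper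
  have hdescent := le_add_inner_gradient_add_of_inner_fderiv_gradient_le
    (hJ.differentiable (by norm_num))
    ((hJ.gradient (m := 1) (by norm_num)).differentiable (by norm_num))
    (fun θ v => (hHess θ v).2) θ (-((a / b) • Δθ))
  rw [← sub_eq_add_neg, inner_neg_right, real_inner_smul_right, norm_neg, norm_smul,
    Real.norm_of_nonneg (by positivity)] at hdescent
  calc J (θ - (a / b) • Δθ) - J θ
      ≤ -(a / b * ⟪gradient J θ, Δθ⟫) + a / (2 * b) * (a * ‖Δθ‖ ^ 2) := by
        have : b / 2 * (a / b * ‖Δθ‖) ^ 2 = a / (2 * b) * (a * ‖Δθ‖ ^ 2) := by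
          field_simp
        linarith
    _ ≤ -(a / b * ⟪gradient J θ, Δθ⟫) + a / (2 * b) * ⟪gradient J θ, Δθ⟫ := by gcongr
    _ = -(a / (2 * b ^ 2)) * (b * ⟪gradient J θ, Δθ⟫) := by field_simp; ring
    _ ≤ -(a / (2 * b ^ 2)) * ‖gradient J θ‖ ^ 2 := by
        rw [neg_mul, neg_mul, neg_le_neg_iff]
        gcongr

/-- Descent guarantee for the preconditioned Newton-type update with
step size `a/b`, for a twice continuously differentiable objective `J` whose Hessian
satisfies the Loewner bounds `a•I ≼ ∇²J(θ) ≼ b•I`, and a symmetric preconditioner `F`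
with `a•I ≼ F ≼ b•I`. -/
theorem stmt_0 (d : ℕ) (J : EuclideanSpace ℝ (Fin d) → ℝ) (a b : ℝ)
    (ha : 0 < a) (hab : a ≤ b)
    (hJ : ContDiff ℝ 2 J)
    (hHess : ∀ θ v : EuclideanSpace ℝ (Fin d),
      a * ‖v‖ ^ 2 ≤ ⟪fderiv ℝ (gradient J) θ v, v⟫ ∧
        ⟪fderiv ℝ (gradient J) θ v, v⟫ ≤ b * ‖v‖ ^ 2)
    (F : Matrix (Fin d) (Fin d) ℝ) (hFsymm : F.IsSymm)
    (hFa : (F - a • (1 : Matrix (Fin d) (Fin d) ℝ)).PosSemidef)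
    (hFb : ((b • (1 : Matrix (Fin d) (Fin d) ℝ)) - F).PosSemidef)
    (θ Δθ : EuclideanSpace ℝ (Fin d))
    (hΔθ : Δθ = Matrix.toEuclideanLin F⁻¹ (gradient J θ)) :
    J (θ - (a / b) • Δθ) - J θ ≤ -(a / (2 * b ^ 2)) * ‖gradient J θ‖ ^ 2 :=
  stmt_0_general d J a b ha hab hJ hHess F hFa hFb θ Δθ hΔθ
end

section
/- Let J : ℝ^d → ℝ be convex and differentiable with L-Lipschitz gradient (‖∇J(θ) − ∇J(θ')‖₂ ≤ L‖θ − θ'‖₂ for all θ, θ'), attaining a minimizer θ*. Let F be a symmetric positive definite d×d matrix with smallest eigenvalue λ_min(F), and consider the preconditioned gradient iteration θ^{(k+1)} = θ^{(k)} − α F⁻¹ ∇J(θ^{(k)}) with fixed step size 0 < α ≤ λ_min(F)/L. Then for every k ≥ 1, J(θ^{(k)}) − J(θ*) ≤ (θ^{(0)} − θ*)ᵀ F (θ^{(0)} − θ*) / (2αk). -/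
/-!
Write `T` for the operator of `F`, so a step is `θ' = θ - α p` with `T p = g = ∇J(θ)`.
The descent lemma for `L`-smooth `J`, with `α L ≤ λ_min(F)` and `λ_min(F) ‖p‖² ≤ ⟪p, T p⟫`,
gives the sufficient decrease `J(θ') ≤ J(θ) - (α/2) ⟪g, p⟫`. Expanding the `F`-weighted
distance `D(θ) = ⟪θ - θ*, T (θ - θ*)⟫` and using the convexity bound
`J(θ) - J(θ*) ≤ ⟪g, θ - θ*⟫` turns this into `2α (J(θ') - J(θ*)) ≤ D(θ) - D(θ')`.
As `J(θ_k)` is nonincreasing, telescoping gives `2αk (J(θ_k) - J(θ*)) ≤ D(θ_0)`.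
-/

open scoped RealInnerProductSpace MatrixOrder

theorem natCast_mul_le_sub_of_antitone {e D : ℕ → ℝ} (he : Antitone e)
    (hstep : ∀ k, e (k + 1) ≤ D k - D (k + 1)) (k : ℕ) : k * e k ≤ D 0 - D k := by
  induction k with
  | zero => simp
  | succ k ih =>
    have hmono : (k : ℝ) * e (k + 1) ≤ k * e k :=
      mul_le_mul_of_nonneg_left (he k.le_succ) k.cast_nonneg
    push_cast
    linarith [hstep k]

section GradientMethod

variable {E : Type*} [NormedAddCommGroup E] [InnerProductSpace ℝ E] [CompleteSpace E]
  {J : E → ℝ} {L lam α : ℝ} {T : E →ₗ[ℝ] E}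

theorem hasDerivAt_apply_add_smul (hdiff : Differentiable ℝ J) (x v : E) (t : ℝ) :
    HasDerivAt (fun s : ℝ => J (x + s • v)) ⟪gradient J (x + t • v), v⟫ t := by
  have hline : HasDerivAt (fun s : ℝ => x + s • v) v t := by
    simpa using ((hasDerivAt_id t).smul_const v).const_add x
  have h := (hasGradientAt_iff_hasFDerivAt.mp (hdiff _).hasGradientAt).comp_hasDerivAt t hline
  simp only [InnerProductSpace.toDual_apply_apply] at h ⊢
  exact h

theorem ConvexOn.add_inner_gradient_le (hconv : ConvexOn ℝ Set.univ J)
    (hdiff : Differentiable ℝ J) (x y : E) :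
    J x + ⟪gradient J x, y - x⟫ ≤ J y := by
  have hline : ConvexOn ℝ Set.univ (fun t : ℝ => J (x + t • (y - x))) := by
    simpa only [Set.preimage_univ, Function.comp_def, AffineMap.lineMap_apply_module', add_comm]
      using hconv.comp_affineMap (AffineMap.lineMap x y)
  have hslope := hline.le_slope_of_hasDerivAt (Set.mem_univ 0) (Set.mem_univ 1) one_pos
    (hasDerivAt_apply_add_smul hdiff x (y - x) 0)
  simp only [slope_def_field, zero_smul, add_zero, one_smul, sub_zero, div_one,
    add_sub_cancel] at hslope
  linarith

theorem apply_add_le_of_lipschitz_gradient (hdiff : Differentiable ℝ J)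
    (hlip : ∀ x y : E, ‖gradient J x - gradient J y‖ ≤ L * ‖x - y‖) (x v : E) :
    J (x + v) ≤ J x + ⟪gradient J x, v⟫ + L / 2 * ‖v‖ ^ 2 := by
  set c := ⟪gradient J x, v⟫
  set C := L * ‖v‖ ^ 2
  let gap : ℝ → ℝ := fun t => J (x + t • v) - (J x + t * c + C * t ^ 2 / 2)
  have hgap : ∀ t, HasDerivAt gap (⟪gradient J (x + t • v), v⟫ - (c + C * t)) t := by
    intro t
    have hquad : HasDerivAt (fun t : ℝ => J x + t * c + C * t ^ 2 / 2) (c + C * t) t := by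
      refine (((hasDerivAt_mul_const c).const_add (J x)).add
        (((hasDerivAt_pow 2 t).const_mul C).div_const 2)).congr_deriv ?_
      push_cast
      ring
    exact (hasDerivAt_apply_add_smul hdiff x v t).sub hquad
  have hanti : AntitoneOn gap (Set.Ici 0) := by
    refine antitoneOn_of_deriv_nonpos (convex_Ici 0)
      (continuous_iff_continuousAt.2 fun t => (hgap t).continuousAt).continuousOn
      (fun t _ => (hgap t).differentiableAt.differentiableWithinAt) fun t ht => ?_
    rw [interior_Ici] at ht
    have hinc : ⟪gradient J (x + t • v) - gradient J x, v⟫ ≤ C * t :=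
      calc ⟪gradient J (x + t • v) - gradient J x, v⟫
          ≤ ‖gradient J (x + t • v) - gradient J x‖ * ‖v‖ := real_inner_le_norm _ _
        _ ≤ L * ‖x + t • v - x‖ * ‖v‖ := by gcongr; exact hlip _ _
        _ = C * t := by
          rw [add_sub_cancel_left, norm_smul, Real.norm_of_nonneg (le_of_lt ht)]
          ring
    rw [inner_sub_left] at hinc
    rw [(hgap t).deriv]
    linarith
  have h01 := hanti Set.self_mem_Ici (Set.mem_Ici.mpr zero_le_one) zero_le_one
  simp only [gap, zero_smul, add_zero, one_smul, zero_mul, one_mul, one_pow] at h01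
  linarith

theorem apply_sub_smul_le_of_lipschitz_gradient (hdiff : Differentiable ℝ J)
    (hlip : ∀ x y : E, ‖gradient J x - gradient J y‖ ≤ L * ‖x - y‖)
    (hcoer : ∀ v, lam * ‖v‖ ^ 2 ≤ ⟪v, T v⟫) (hα0 : 0 ≤ α) (hαL : α * L ≤ lam)
    {x p : E} (hp : T p = gradient J x) :
    J (x - α • p) ≤ J x - α / 2 * ⟪gradient J x, p⟫ := by
  have hdesc := apply_add_le_of_lipschitz_gradient hdiff hlip x (-(α • p))
  rw [← sub_eq_add_neg, inner_neg_right, real_inner_smul_right, norm_neg, norm_smul,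
    Real.norm_of_nonneg hα0] at hdesc
  have hquad : α * L * ‖p‖ ^ 2 ≤ ⟪gradient J x, p⟫ :=
    calc α * L * ‖p‖ ^ 2 ≤ lam * ‖p‖ ^ 2 := by gcongr
      _ ≤ ⟪p, T p⟫ := hcoer p
      _ = ⟪gradient J x, p⟫ := by rw [hp, real_inner_comm]
  linarith [mul_le_mul_of_nonneg_left hquad hα0]

theorem two_mul_sub_le_of_preconditioned_step (hconv : ConvexOn ℝ Set.univ J)
    (hdiff : Differentiable ℝ J)
    (hlip : ∀ x y : E, ‖gradient J x - gradient J y‖ ≤ L * ‖x - y‖)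
    (hT : T.IsSymmetric) (hcoer : ∀ v, lam * ‖v‖ ^ 2 ≤ ⟪v, T v⟫) (hα0 : 0 ≤ α)
    (hαL : α * L ≤ lam) {x p : E} (hp : T p = gradient J x) (z : E) :
    2 * α * (J (x - α • p) - J z) ≤
      ⟪x - z, T (x - z)⟫ - ⟪x - α • p - z, T (x - α • p - z)⟫ := by
  have hdecrease := apply_sub_smul_le_of_lipschitz_gradient hdiff hlip hcoer hα0 hαL hp
  have hsupport := hconv.add_inner_gradient_le hdiff x z
  have hexpand : ⟪x - α • p - z, T (x - α • p - z)⟫ =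
      ⟪x - z, T (x - z)⟫ - 2 * α * ⟪gradient J x, x - z⟫ + α ^ 2 * ⟪gradient J x, p⟫ := by
    rw [sub_right_comm]
    generalize x - z = w
    rw [map_sub, map_smul]
    simp only [inner_sub_left, inner_sub_right, real_inner_smul_left, real_inner_smul_right]
    rw [← hT p, hp, real_inner_comm w, real_inner_comm p]
    ring
  have hzx : ⟪gradient J x, z - x⟫ = -⟪gradient J x, x - z⟫ := by
    rw [← inner_neg_right, neg_sub]
  have hgap : J (x - α • p) - J z ≤ ⟪gradient J x, x - z⟫ - α / 2 * ⟪gradient J x, p⟫ := by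
    linarith
  rw [hexpand]
  linarith [mul_le_mul_of_nonneg_left hgap (by positivity : (0 : ℝ) ≤ 2 * α)]

theorem preconditioned_gradient_descent_rate (hconv : ConvexOn ℝ Set.univ J)
    (hdiff : Differentiable ℝ J) (hL : 0 ≤ L)
    (hlip : ∀ x y : E, ‖gradient J x - gradient J y‖ ≤ L * ‖x - y‖)
    (hT : T.IsSymmetric) (hcoer : ∀ v, lam * ‖v‖ ^ 2 ≤ ⟪v, T v⟫) {P : E →ₗ[ℝ] E}
    (hTP : ∀ v, T (P v) = v) (hα0 : 0 < α) (hαL : α * L ≤ lam) {θ : ℕ → E}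
    (hiter : ∀ k, θ (k + 1) = θ k - α • P (gradient J (θ k))) (z : E) {k : ℕ} (hk : 0 < k) :
    J (θ k) - J z ≤ ⟪θ 0 - z, T (θ 0 - z)⟫ / (2 * α * k) := by
  have hlam : 0 ≤ lam := (mul_nonneg hα0.le hL).trans hαL
  have hT_nonneg : ∀ v, 0 ≤ ⟪v, T v⟫ := fun v =>
    (by positivity : 0 ≤ lam * ‖v‖ ^ 2).trans (hcoer v)
  have hanti : Antitone fun k => 2 * α * (J (θ k) - J z) := by
    refine antitone_nat_of_succ_le fun k => ?_
    have hdecrease := apply_sub_smul_le_of_lipschitz_gradient hdiff hlip hcoer hα0.le hαL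
      (hTP (gradient J (θ k)))
    have hpos : 0 ≤ ⟪gradient J (θ k), P (gradient J (θ k))⟫ := by
      simpa only [hTP, real_inner_comm] using hT_nonneg (P (gradient J (θ k)))
    have hstep : J (θ (k + 1)) ≤ J (θ k) := by
      rw [hiter]
      linarith [mul_nonneg hα0.le hpos]
    gcongr
  have hbound := natCast_mul_le_sub_of_antitone hanti
    (D := fun k => ⟪θ k - z, T (θ k - z)⟫) (fun k => by
    simpa only [hiter] using two_mul_sub_le_of_preconditioned_step hconv hdiff hlip hT hcoer
      hα0.le hαL (hTP (gradient J (θ k))) z) k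
  rw [le_div_iff₀ (by positivity)]
  linarith [hT_nonneg (θ k - z)]

end GradientMethod

theorem Matrix.IsHermitian.mul_norm_sq_le_inner_toEuclideanLin {n : Type*} [Fintype n]
    [DecidableEq n] {F : Matrix n n ℝ} (hF : F.IsHermitian) {c : ℝ}
    (hc : ∀ i, c ≤ hF.eigenvalues i) (v : EuclideanSpace ℝ n) :
    c * ‖v‖ ^ 2 ≤ ⟪v, toEuclideanLin F v⟫ := by
  have hle : algebraMap ℝ _ c ≤ F := algebraMap_le_of_le_spectrum (by
    rw [hF.spectrum_real_eq_range_eigenvalues]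
    rintro _ ⟨i, rfl⟩
    exact hc i) hF
  simpa [Algebra.algebraMap_eq_smul_one, inner_sub_right, real_inner_smul_right] using
    (isPositive_toEuclideanLin_iff.mpr (le_iff.mp hle)).inner_nonneg_right v

theorem Matrix.toEuclideanLin_apply_toEuclideanLin_inv {n : Type*} [Fintype n]
    [DecidableEq n] {F : Matrix n n ℝ} (hF : IsUnit F) (v : EuclideanSpace ℝ n) :
    toEuclideanLin F (toEuclideanLin F⁻¹ v) = v := by
  simp [Matrix.toLpLin_apply, Matrix.mulVec_mulVec,
    Matrix.mul_nonsing_inv _ ((isUnit_iff_isUnit_det F).mp hF)]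

theorem stmt_2_general (d : ℕ) (hd : 0 < d) (J : EuclideanSpace ℝ (Fin d) → ℝ) (L : ℝ) (hL : 0 < L)
    (hconv : ConvexOn ℝ Set.univ J) (hdiff : Differentiable ℝ J)
    (hlip : ∀ x y : EuclideanSpace ℝ (Fin d),
      ‖gradient J x - gradient J y‖ ≤ L * ‖x - y‖)
    (θstar : EuclideanSpace ℝ (Fin d))
    (F : Matrix (Fin d) (Fin d) ℝ) (hF : F.PosDef)
    (lmin : ℝ)
    (hlmin : lmin = Finset.univ.inf'
      (⟨⟨0, hd⟩, Finset.mem_univ _⟩ : (Finset.univ : Finset (Fin d)).Nonempty)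
      hF.1.eigenvalues)
    (α : ℝ) (hα0 : 0 < α) (hα : α ≤ lmin / L)
    (θ : ℕ → EuclideanSpace ℝ (Fin d))
    (hiter : ∀ k, θ (k + 1) = θ k - α • Matrix.toEuclideanLin F⁻¹ (gradient J (θ k))) :
    ∀ k : ℕ, 1 ≤ k →
      J (θ k) - J θstar ≤
        ⟪θ 0 - θstar, Matrix.toEuclideanLin F (θ 0 - θstar)⟫ / (2 * α * k) := by
  intro k hk
  have hcoer := hF.1.mul_norm_sq_le_inner_toEuclideanLin (c := lmin) fun i =>
    hlmin ▸ Finset.inf'_le _ (Finset.mem_univ i)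
  exact preconditioned_gradient_descent_rate hconv hdiff hL.le hlip
    (Matrix.isSymmetric_toEuclideanLin_iff.mpr hF.1) hcoer
    (Matrix.toEuclideanLin_apply_toEuclideanLin_inv hF.isUnit) hα0
    ((le_div_iff₀ hL).mp hα) hiter θstar hk

/-- O(1/k) convergence of the preconditioned gradient iteration
`θ^{k+1} = θ^k − α F⁻¹ ∇J(θ^k)` for a convex objective with `L`-Lipschitz gradient,
with fixed step size `0 < α ≤ λ_min(F)/L`. -/
theorem stmt_2 (d : ℕ) (hd : 0 < d) (J : EuclideanSpace ℝ (Fin d) → ℝ) (L : ℝ) (hL : 0 < L)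
    (hconv : ConvexOn ℝ Set.univ J) (hdiff : Differentiable ℝ J)
    (hlip : ∀ x y : EuclideanSpace ℝ (Fin d),
      ‖gradient J x - gradient J y‖ ≤ L * ‖x - y‖)
    (θstar : EuclideanSpace ℝ (Fin d)) (hmin : ∀ x, J θstar ≤ J x)
    (F : Matrix (Fin d) (Fin d) ℝ) (hF : F.PosDef)
    (lmin : ℝ)
    (hlmin : lmin = Finset.univ.inf'
      (⟨⟨0, hd⟩, Finset.mem_univ _⟩ : (Finset.univ : Finset (Fin d)).Nonempty)
      hF.1.eigenvalues)
    (α : ℝ) (hα0 : 0 < α) (hα : α ≤ lmin / L)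
    (θ : ℕ → EuclideanSpace ℝ (Fin d))
    (hiter : ∀ k, θ (k + 1) = θ k - α • Matrix.toEuclideanLin F⁻¹ (gradient J (θ k))) :
    ∀ k : ℕ, 1 ≤ k →
      J (θ k) - J θstar ≤
        ⟪θ 0 - θstar, Matrix.toEuclideanLin F (θ 0 - θstar)⟫ / (2 * α * k) :=
  stmt_2_general d hd J L hL hconv hdiff hlip θstar F hF lmin hlmin α hα0 hα θ hiter
end
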